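/- Let x_1, …, x_K be vertices of K pairwise distinct receiver states (H_1, V_1), …, (H_K, V_K) over N such that every pair of these vertices satisfies BC1*. Then there exists a packet combination P ⊆ N that is instantly decodable or aggregating for every vertex x_j, j = 1, …, K; that is, all cliques formed under BC1* are proper (Theorem 2). -/

import Mathlib

/-!
Take `P := x m` for a vertex of least size. It is instantly decodable for its own vertex, and for
any other `x j` the BC1* condition (read with `x m` as the smaller vertex) leaves at most one packet
of `P` outside `x j ∪ H_j`. If there is none, `P` is instantly decodable for `x j`; if there is one,
it lies in some other vertex `y` of receiver `j`, and `P` is aggregating for `x j` through `y`.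
-/

/-- A receiver state over a finite set `N` of packets: a Has set `H ⊆ N` together with
a family `V` of nonempty, pairwise disjoint packet sets (the vertices) whose union is `N \ H`. -/
structure ReceiverState (N : Finset ℕ) where
  H : Finset ℕ
  V : Finset (Finset ℕ)
  has_subset : H ⊆ N
  vertex_nonempty : ∀ x ∈ V, x.Nonempty
  vertex_disjoint : ∀ x ∈ V, ∀ y ∈ V, x ≠ y → Disjoint x y
  vertex_union : V.sup id = N \ H

/-- `P` is instantly decodable for vertex `x` of receiver state `R`. -/
def InstantlyDecodable {N : Finset ℕ} (R : ReceiverState N) (x P : Finset ℕ) : Prop :=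
  P ⊆ x ∪ R.H ∧ (P ∩ x).Nonempty

/-- `P` is aggregating for vertex `x` of receiver state `R`. -/
def Aggregating {N : Finset ℕ} (R : ReceiverState N) (x P : Finset ℕ) : Prop :=
  ∃ y ∈ R.V, y ≠ x ∧ P ⊆ x ∪ y ∪ R.H ∧ (P ∩ x).Nonempty ∧ (P ∩ y).Nonempty

/-- `P` benefits vertex `x` of receiver state `R`. -/
def Benefits {N : Finset ℕ} (R : ReceiverState N) (x P : Finset ℕ) : Prop :=
  InstantlyDecodable R x P ∨ Aggregating R x P

/-- Condition BC1 between vertices `x` and `y` of two different receiver states. -/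
def BC1 (x y : Finset ℕ) : Prop := (x ∩ y).Nonempty

/-- Condition BC2 between vertex `x` of `Ri` and vertex `y` of `Rk`. -/
def BC2 {N : Finset ℕ} (Ri Rk : ReceiverState N) (x y : Finset ℕ) : Prop :=
  x ∩ y = ∅ ∧ (x ∩ Rk.H).Nonempty ∧ (y ∩ Ri.H).Nonempty

/-- The condition of BC1* for `x` and `y` written so that `|x| ≤ |y|`, where `Hk` is the
Has set of the receiver of `y`. -/
def BC1starCond (Hk : Finset ℕ) (x y : Finset ℕ) : Prop :=
  (x.card = 1 → x ⊆ y) ∧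
  (x.card = y.card → 2 ≤ x.card → x.card - 1 ≤ (x ∩ y).card) ∧
  (x.card < y.card → 2 ≤ x.card → (x \ Hk).card - 1 ≤ ((x \ Hk) ∩ y).card)

/-- Condition BC1* between vertex `x` of `Ri` and vertex `y` of `Rk`. -/
def BC1star {N : Finset ℕ} (Ri Rk : ReceiverState N) (x y : Finset ℕ) : Prop :=
  (x ∩ y).Nonempty ∧
  (x.card ≤ y.card → BC1starCond Rk.H x y) ∧
  (y.card ≤ x.card → BC1starCond Ri.H y x)

/-- Condition BC2* between vertex `x` of `Ri` and vertex `y` of `Rk`. -/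
def BC2star {N : Finset ℕ} (Ri Rk : ReceiverState N) (x y : Finset ℕ) : Prop :=
  x ∩ y = ∅ ∧ x ⊆ Rk.H ∧ y ⊆ Ri.H

namespace ReceiverState

variable {N : Finset ℕ} (R : ReceiverState N)

theorem subset_of_mem_V {x : Finset ℕ} (hx : x ∈ R.V) : x ⊆ N := fun p hp => by
  have hp' : p ∈ R.V.sup id := Finset.le_sup (f := id) hx hp
  rw [R.vertex_union] at hp'
  exact (Finset.mem_sdiff.mp hp').1

theorem exists_mem_V_of_mem {p : ℕ} (hpN : p ∈ N) (hpH : p ∉ R.H) : ∃ y ∈ R.V, p ∈ y := by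
  have hp : p ∈ R.V.sup id := R.vertex_union ▸ Finset.mem_sdiff.mpr ⟨hpN, hpH⟩
  simpa using Finset.mem_sup.mp hp

theorem instantlyDecodable_self {x : Finset ℕ} (hx : x ∈ R.V) : InstantlyDecodable R x x :=
  ⟨Finset.subset_union_left, by simpa using R.vertex_nonempty x hx⟩

theorem benefits_of_card_sdiff_le_one {x P : Finset ℕ} (hPN : P ⊆ N)
    (hPx : (P ∩ x).Nonempty) (hcard : ((P \ R.H) \ x).card ≤ 1) : Benefits R x P := by
  have hsub : ∀ p ∈ P, p ∉ R.H → p ∉ x → p ∈ (P \ R.H) \ x := fun p hp hpH hpx => by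
    simp [hp, hpH, hpx]
  rcases ((P \ R.H) \ x).eq_empty_or_nonempty with hempty | ⟨q, hq⟩
  · refine Or.inl ⟨fun p hp => ?_, hPx⟩
    by_contra hpxH
    simp only [Finset.mem_union, not_or] at hpxH
    simpa [hempty] using hsub p hp hpxH.2 hpxH.1
  · obtain ⟨⟨hqP, hqH⟩, hqx⟩ : (q ∈ P ∧ q ∉ R.H) ∧ q ∉ x := by simpa using hq
    obtain ⟨y, hy, hqy⟩ := R.exists_mem_V_of_mem (hPN hqP) hqH
    refine Or.inr ⟨y, hy, fun hyx => hqx (hyx ▸ hqy), fun p hp => ?_, hPx, ⟨q, by simp [hqP, hqy]⟩⟩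
    by_cases hpH : p ∈ R.H
    · simp [hpH]
    by_cases hpx : p ∈ x
    · simp [hpx]
    rw [Finset.card_le_one.mp hcard p (hsub p hp hpH hpx) q hq]
    simp [hqy]

end ReceiverState

theorem Finset.card_sdiff_le_one_of_card_sub_one_le {α : Type*} [DecidableEq α] {s t : Finset α}
    (h : s.card - 1 ≤ (s ∩ t).card) : (s \ t).card ≤ 1 := by
  have := Finset.card_inter_add_card_sdiff s t
  omega

theorem BC1starCond.card_sdiff_le_one {H x y : Finset ℕ} (hxy : x.card ≤ y.card)
    (h : BC1starCond H x y) : ((x \ H) \ y).card ≤ 1 := by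
  obtain ⟨-, hEq, hLt⟩ := h
  have hsub : (x \ H) \ y ⊆ x \ y := Finset.sdiff_subset_sdiff Finset.sdiff_subset le_rfl
  rcases Nat.lt_or_ge x.card 2 with hsmall | hbig
  · have := Finset.card_le_card (hsub.trans Finset.sdiff_subset)
    omega
  rcases hxy.eq_or_lt with hxy | hxy
  · exact (Finset.card_le_card hsub).trans
      (Finset.card_sdiff_le_one_of_card_sub_one_le (hEq hxy hbig))
  · exact Finset.card_sdiff_le_one_of_card_sub_one_le (hLt hxy hbig)

theorem stmt8_general {N : Finset ℕ} {K : ℕ} (hK : 0 < K)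
    (R : Fin K → ReceiverState N) (x : Fin K → Finset ℕ)
    (hx : ∀ j, x j ∈ (R j).V)
    (hBC : ∀ j l, j ≠ l → BC1star (R j) (R l) (x j) (x l)) :
    ∃ P : Finset ℕ, P ⊆ N ∧ P.Nonempty ∧
      ∀ j, InstantlyDecodable (R j) (x j) P ∨ Aggregating (R j) (x j) P := by
  have := Fin.pos_iff_nonempty.mp hK
  obtain ⟨m, hm⟩ := Finite.exists_min fun j => (x j).card
  have hPN : x m ⊆ N := (R m).subset_of_mem_V (hx m)
  refine ⟨x m, hPN, (R m).vertex_nonempty _ (hx m), fun j => ?_⟩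
  by_cases hjm : j = m
  · subst hjm
    exact Or.inl ((R j).instantlyDecodable_self (hx j))
  obtain ⟨hmeet, hcond, -⟩ := hBC m j (Ne.symm hjm)
  exact (R j).benefits_of_card_sdiff_le_one hPN hmeet
    ((hcond (hm j)).card_sdiff_le_one (hm j))

/-- Theorem 2: all cliques formed under BC1* are proper. -/
theorem stmt8 {N : Finset ℕ} {K : ℕ} (hK : 0 < K)
    (R : Fin K → ReceiverState N) (x : Fin K → Finset ℕ)
    (hdist : ∀ j l, j ≠ l → R j ≠ R l)
    (hx : ∀ j, x j ∈ (R j).V)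
    (hBC : ∀ j l, j ≠ l → BC1star (R j) (R l) (x j) (x l)) :
    ∃ P : Finset ℕ, P ⊆ N ∧ P.Nonempty ∧
      ∀ j, InstantlyDecodable (R j) (x j) P ∨ Aggregating (R j) (x j) P :=
  stmt8_general hK R x hx hBC
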